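/- Consider a commutative diagram of groups with exact columns π₂(M) → π₂(M,L) → π₁(L) → π₁(M), π₂(P) → π₂(P,N) → π₁(N) → π₁(P), and π₂(D) → π₂(D,S) → π₁(S) (exact sequences of pairs), and with rows such that π₂(M) → π₂(P) is an isomorphism, π₁(M) → π₁(P) is an isomorphism, π₁(L) → π₁(N) → π₁(S) is exact with π₁(L) → π₁(N) injective, and the boundary map π₂(D,S) → π₁(S) is an isomorphism. Suppose moreover that j∘i = 0 for the middle row π₂(M,L) →ⁱ π₂(P,N) →ʲ π₂(D,S). Then this middle row is exact at the middle term, i.e. ker j ⊆ im i. -/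
import Mathlib


/-- diagram chase for the homotopy sequences of the Hamiltonian fibration
`(P, N) → (D², S¹)` with fiber `(M, L)`.  Groups `G2M = π₂(M)`, `G2ML = π₂(M,L)`,
`G1L = π₁(L)`, `G1M = π₁(M)`, `G2P = π₂(P)`, `G2PN = π₂(P,N)`, `G1N = π₁(N)`,
`G1P = π₁(P)`, `G2DS = π₂(D,S)`, `G1S = π₁(S)`.  Assuming the columns are exact,
`π₂(M) → π₂(P)` and `π₁(M) → π₁(P)` and `∂ : π₂(D,S) → π₁(S)` are isomorphisms,
`π₁(L) → π₁(N) → π₁(S)` is exact with `π₁(L) → π₁(N)` injective, all squares commute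
and `j ∘ i = 1`, the middle row `π₂(M,L) →ⁱ π₂(P,N) →ʲ π₂(D,S)` is exact at the middle
term: `ker j ⊆ im i`. -/
theorem middle_row_exact
    (G2M G2ML G1L G1M G2P G2PN G1N G1P G2DS G1S : Type*)
    [Group G2M] [Group G2ML] [Group G1L] [Group G1M]
    [Group G2P] [Group G2PN] [Group G1N] [Group G1P]
    [Group G2DS] [Group G1S]
    -- first column (pair sequence of (M, L))
    (kM : G2M →* G2ML) (dM : G2ML →* G1L) (ιM : G1L →* G1M)
    (hcol1a : ∀ x, dM x = 1 ↔ x ∈ kM.range)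
    (hcol1b : ∀ y, ιM y = 1 ↔ y ∈ dM.range)
    -- second column (pair sequence of (P, N))
    (kP : G2P →* G2PN) (dP : G2PN →* G1N) (ιP : G1N →* G1P)
    (hcol2a : ∀ x, dP x = 1 ↔ x ∈ kP.range)
    (hcol2b : ∀ y, ιP y = 1 ↔ y ∈ dP.range)
    -- third column (pair sequence of (D², S¹)): the boundary map is an isomorphism
    (dD : G2DS →* G1S) (hdD : Function.Bijective dD)
    -- rows
    (e2 : G2M →* G2P) (he2 : Function.Bijective e2)
    (i : G2ML →* G2PN) (j : G2PN →* G2DS)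
    (iL : G1L →* G1N) (p : G1N →* G1S)
    (e1 : G1M →* G1P) (he1 : Function.Bijective e1)
    (hrow3 : ∀ z, p z = 1 ↔ z ∈ iL.range) (hiL : Function.Injective iL)
    (hji : ∀ x, j (i x) = 1)
    -- commuting squares
    (hsq1 : ∀ x, i (kM x) = kP (e2 x))
    (hsq2 : ∀ x, dP (i x) = iL (dM x))
    (hsq3 : ∀ x, dD (j x) = p (dP x))
    (hsq4 : ∀ y, ιP (iL y) = e1 (ιM y)) :
    ∀ β : G2PN, j β = 1 → ∃ α : G2ML, i α = β := by
  intro β hβ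
  -- p (dP β) = 1
  have hp : p (dP β) = 1 := by rw [← hsq3, hβ, map_one]
  obtain ⟨y, hy⟩ := (hrow3 (dP β)).mp hp
  -- ιM y = 1
  have h1 : ιP (dP β) = 1 := (hcol2b (dP β)).mpr ⟨β, rfl⟩
  have h2 : e1 (ιM y) = 1 := by rw [← hsq4, hy, h1]
  have h3 : ιM y = 1 := he1.injective (by rw [h2, map_one])
  obtain ⟨α₀, hα₀⟩ := (hcol1b y).mp h3
  -- β * (i α₀)⁻¹ is in ker dP
  have h4 : dP (β * (i α₀)⁻¹) = 1 := by
    rw [map_mul, map_inv, hsq2, hα₀, hy, mul_inv_cancel]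
  obtain ⟨z, hz⟩ := (hcol2a _).mp h4
  obtain ⟨w, hw⟩ := he2.surjective z
  refine ⟨kM w * α₀, ?_⟩
  rw [map_mul, hsq1, hw, hz, inv_mul_cancel_right]
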